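/- Under the hypotheses of the phase-noise averaging identity — θ_1, …, θ_N : Ω → ℝ mutually independent real random variables with E[exp(i·θ_n)] = m ∈ ℝ for all n, Θ̃(ω) the diagonal matrix with entries exp(i·θ_n(ω)), and R an N×N complex matrix — if additionally every diagonal entry of R equals 1 (R_{nn} = 1 for all n), then the entrywise expectation of Θ̃ R Θ̃ᴴ equals m²·R + (1 − m²)·I_N, where I_N is the N×N identity matrix. -/

import Mathlib

/-! On the diagonal the two phase factors cancel, leaving `R n n = 1`. Off the diagonal,
independence factors the expectation as `E[e^{iθ_n}] · conj E[e^{iθ_n'}] = m · m = m²`. -/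

open MeasureTheory ProbabilityTheory Complex Matrix

lemma exp_neg_I_mul_ofReal (x : ℝ) :
    Complex.exp (-(Complex.I * x)) = starRingEnd ℂ (Complex.exp (Complex.I * x)) := by
  rw [← Complex.exp_conj, map_mul, Complex.conj_I, Complex.conj_ofReal, neg_mul]

lemma integral_exp_neg_I_mul_ofReal {Ω : Type*} [MeasurableSpace Ω] (μ : Measure Ω)
    (X : Ω → ℝ) :
    ∫ ω, Complex.exp (-(Complex.I * X ω)) ∂μ =
      starRingEnd ℂ (∫ ω, Complex.exp (Complex.I * X ω) ∂μ) := by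
  simp_rw [exp_neg_I_mul_ofReal]
  exact integral_conj

lemma ProbabilityTheory.IndepFun.integral_exp_I_mul_mul_exp_neg_I_mul
    {Ω : Type*} [MeasurableSpace Ω] {μ : Measure Ω} {X Y : Ω → ℝ} (hXY : IndepFun X Y μ) (hX : Measurable X)
    (hY : Measurable Y) :
    ∫ ω, Complex.exp (Complex.I * X ω) * Complex.exp (-(Complex.I * Y ω)) ∂μ =
      (∫ ω, Complex.exp (Complex.I * X ω) ∂μ) *
        starRingEnd ℂ (∫ ω, Complex.exp (Complex.I * Y ω) ∂μ) := by
  rw [← integral_exp_neg_I_mul_ofReal]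
  exact hXY.integral_fun_comp_mul_comp (f := fun x : ℝ ↦ Complex.exp (Complex.I * x))
    (g := fun y : ℝ ↦ Complex.exp (-(Complex.I * y))) hX.aemeasurable hY.aemeasurable
    (by fun_prop : Continuous _).aestronglyMeasurable
    (by fun_prop : Continuous _).aestronglyMeasurable

theorem phase_noise_averaged_correlation_unit_diagonal_general
    {Ω : Type*} [MeasurableSpace Ω] (μ : Measure Ω) [IsProbabilityMeasure μ]
    {N : ℕ}
    (θ : Fin N → Ω → ℝ) (hmeas : ∀ n, Measurable (θ n))
    (hindep : iIndepFun θ μ)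
    (m : ℝ) (hm : ∀ n, ∫ ω, Complex.exp (Complex.I * (θ n ω : ℂ)) ∂μ = (m : ℂ))
    (R : Matrix (Fin N) (Fin N) ℂ) (hdiag : ∀ n, R n n = 1) :
    (Matrix.of fun n n' : Fin N =>
        ∫ ω, Complex.exp (Complex.I * (θ n ω : ℂ)) * R n n' *
          Complex.exp (-(Complex.I * (θ n' ω : ℂ))) ∂μ) =
      ((m : ℂ) ^ 2) • R + ((1 : ℂ) - (m : ℂ) ^ 2) • (1 : Matrix (Fin N) (Fin N) ℂ) := by
  ext n n'
  simp only [of_apply, Matrix.add_apply, Matrix.smul_apply, one_apply, smul_eq_mul]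
  rcases eq_or_ne n n' with rfl | hne
  · simp only [hdiag, mul_one, ← Complex.exp_add, add_neg_cancel, Complex.exp_zero,
      integral_const, probReal_univ, one_smul, if_true]
    ring
  · have hcomm (ω : Ω) : Complex.exp (Complex.I * θ n ω) * R n n' *
        Complex.exp (-(Complex.I * θ n' ω)) =
        R n n' * (Complex.exp (Complex.I * θ n ω) * Complex.exp (-(Complex.I * θ n' ω))) := by
      ring
    simp_rw [hcomm]
    rw [integral_const_mul, (hindep.indepFun hne).integral_exp_I_mul_mul_exp_neg_I_mul
      (hmeas n) (hmeas n'), hm, hm, Complex.conj_ofReal, if_neg hne]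
    ring

/-- Equation (11) of the paper: if additionally `R` has unit diagonal (as for a
correlated Rayleigh fading correlation matrix), the phase-noise–averaged matrix
`E[Θ̃ R Θ̃ᴴ]` equals `m² R + (1 - m²) I_N`. -/
theorem phase_noise_averaged_correlation_unit_diagonal
    {Ω : Type*} [MeasurableSpace Ω] (μ : Measure Ω) [IsProbabilityMeasure μ]
    {N : ℕ} (hN : 0 < N)
    (θ : Fin N → Ω → ℝ) (hmeas : ∀ n, Measurable (θ n))
    (hindep : iIndepFun θ μ)
    (m : ℝ) (hm : ∀ n, ∫ ω, Complex.exp (Complex.I * (θ n ω : ℂ)) ∂μ = (m : ℂ))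
    (R : Matrix (Fin N) (Fin N) ℂ) (hdiag : ∀ n, R n n = 1) :
    (Matrix.of fun n n' : Fin N =>
        ∫ ω, Complex.exp (Complex.I * (θ n ω : ℂ)) * R n n' *
          Complex.exp (-(Complex.I * (θ n' ω : ℂ))) ∂μ) =
      ((m : ℂ) ^ 2) • R + ((1 : ℂ) - (m : ℂ) ^ 2) • (1 : Matrix (Fin N) (Fin N) ℂ) :=
  phase_noise_averaged_correlation_unit_diagonal_general μ θ hmeas hindep m hm R hdiag
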